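/- arXiv:1005.2958 — 3 statements merged into one kernel-verified Lean document; each statement's English description precedes it below -/
import Mathlib

section
/- Let T ∈ ℚ[[s]] be the unique formal power series satisfying T = exp(sT). Then the coefficient of s^k in T equals (k+1)^k/(k+1)! for every k ≥ 0; that is, T = Σ_{k≥0} ((k+1)^k/(k+1)!)·s^k (the Cayley formula for rooted trees). -/
/-- Formal partial derivative `∂f/∂x_i` of a multivariate formal power series. -/
noncomputable def pd {σ : Type*} (R : Type*) [CommSemiring R]
    (i : σ) (f : MvPowerSeries σ R) : MvPowerSeries σ R :=
  fun m => (((m i) + 1 : ℕ) : R) * MvPowerSeries.coeff (m + Finsupp.single i 1) f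

/-- Total degree of a monomial. -/
def mdeg {σ : Type*} (m : σ →₀ ℕ) : ℕ := m.sum fun _ e => e

/-- `exp f = Σ_{k≥0} f^k/k!` for `f` with zero constant coefficient, computed
coefficientwise: since `f^k` has order `≥ k`, only `k ≤ deg m` contribute to the
coefficient at a monomial `m`. -/
noncomputable def expS {σ R : Type*} [CommRing R] [Algebra ℚ R]
    (f : MvPowerSeries σ R) : MvPowerSeries σ R :=
  fun m => MvPowerSeries.coeff m
    (∑ k ∈ Finset.range (mdeg m + 1), ((k.factorial : ℚ)⁻¹) • f ^ k)

/-- `log(1 − u) = −Σ_{k≥1} u^k/k` for `u` with zero constant coefficient, computed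
coefficientwise: since `u^k` has order `≥ k`, only `k ≤ deg m` contribute. -/
noncomputable def logOneSubS {σ R : Type*} [CommRing R] [Algebra ℚ R]
    (u : MvPowerSeries σ R) : MvPowerSeries σ R :=
  fun m => MvPowerSeries.coeff m
    (- ∑ k ∈ Finset.Icc 1 (mdeg m), ((k : ℚ)⁻¹) • u ^ k)

/-!
Differentiating `T = exp(sT)` gives `T' = T · (sT)'`, that is
`(n+1) t_{n+1} = ∑_{i+j=n} t_i (j+1) t_j`, which together with `t_0 = 1` determines `T`.
The numbers `(k+1)^k/(k+1)!` satisfy the same recursion because of Abel's identity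
`∑_{i+j=n} C(n,i) (i+1)^(i-1) (y+j)^j = (y+n+1)^n` at `y = 1`.
Abel's identity is proved by induction on `n`: both sides have `y`-derivative `n` times the
previous case at `y+1`, and both vanish at `y = -(n+1)`, where the left side is an `n`-th finite
difference of a polynomial of degree `n-1`.
-/

open Finset PowerSeries

section ExpS

variable {R : Type*} [CommRing R] [Algebra ℚ R]

noncomputable def expPartialSum (f : R⟦X⟧) (n : ℕ) : R⟦X⟧ :=
  ∑ k ∈ range (n + 1), ((k.factorial : ℚ)⁻¹) • f ^ k

lemma coeff_expS (f : R⟦X⟧) (n : ℕ) : coeff n (expS f) = coeff n (expPartialSum f n) := by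
  have hdeg : mdeg (Finsupp.single () n) = n := by simp [mdeg]
  change expS f (Finsupp.single () n) = _
  rw [expS, hdeg]
  rfl

lemma coeff_expPartialSum_of_le {f : R⟦X⟧} (hf : constantCoeff f = 0) {j n : ℕ}
    (h : j ≤ n) :
    coeff j (expPartialSum f n) = coeff j (expS f) := by
  rw [coeff_expS]
  induction n, h using Nat.le_induction with
  | base => rfl
  | succ n hjn ih =>
    have hvanish : coeff j (f ^ (n + 1)) = 0 :=
      X_pow_dvd_iff.mp (pow_dvd_pow_of_dvd (X_dvd_iff.mpr hf) _) j (by omega)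
    rw [expPartialSum, sum_range_succ, map_add, ← expPartialSum, ih]
    simp [hvanish]

lemma constantCoeff_expS (f : R⟦X⟧) : constantCoeff (expS f) = 1 := by
  rw [← coeff_zero_eq_constantCoeff_apply, coeff_expS]
  simp [expPartialSum]

lemma derivative_expPartialSum_succ (f : R⟦X⟧) (n : ℕ) :
    d⁄dX R (expPartialSum f (n + 1)) = expPartialSum f n * d⁄dX R f := by
  rw [expPartialSum, sum_range_succ', expPartialSum, sum_mul, map_add, map_sum]
  simp only [pow_zero, Nat.factorial_zero, Nat.cast_one, inv_one, one_smul,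
    Derivation.map_one_eq_zero, add_zero]
  refine sum_congr rfl fun k _ => ?_
  rw [Derivation.map_smul_of_tower, Derivation.leibniz_pow, Nat.add_sub_cancel, smul_mul_assoc,
    ← Nat.cast_smul_eq_nsmul ℚ, smul_smul]
  congr 1
  rw [Nat.factorial_succ]
  push_cast
  field_simp

lemma derivative_expS {f : R⟦X⟧} (hf : constantCoeff f = 0) :
    d⁄dX R (expS f) = expS f * d⁄dX R f := by
  ext n
  rw [coeff_derivative, ← coeff_expPartialSum_of_le hf le_rfl, ← coeff_derivative,
    derivative_expPartialSum_succ, coeff_mul, coeff_mul]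
  refine sum_congr rfl fun p hp => ?_
  rw [coeff_expPartialSum_of_le hf (HasAntidiagonal.antidiagonal.fst_le hp)]

end ExpS

lemma sum_range_neg_one_pow_mul_choose_mul_pow_eq_zero {R : Type*} [CommRing R] {j n : ℕ}
    (h : j < n) (y : R) :
    ∑ k ∈ range (n + 1), (-1) ^ (n - k) * (n.choose k : R) * (y + k) ^ j = 0 := by
  have := congrFun (fwdDiff_iter_pow_eq_zero_of_lt (R := R) h) y
  rw [fwdDiff_iter_eq_sum_shift] at this
  simpa [zsmul_eq_mul] using this

namespace Polynomial

lemma eq_of_derivative_eq_of_eval_eq {R : Type*} [CommRing R] [IsAddTorsionFree R]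
    {p q : R[X]} (hd : derivative p = derivative q) {a : R} (ha : p.eval a = q.eval a) :
    p = q := by
  have hconst := eq_C_of_derivative_eq_zero (p := p - q) (by rw [derivative_sub, hd, sub_self])
  have hzero := congrArg (eval a) hconst
  rw [eval_sub, ha, sub_self, eval_C, eq_comm] at hzero
  rwa [hzero, map_zero, sub_eq_zero] at hconst

-- `(i + 1) ^ i / (i + 1)` stands for `(i + 1) ^ (i - 1)`, which truncated subtraction would
-- get wrong at `i = 0`.
noncomputable def abelPoly (K : Type*) [Field K] (n : ℕ) : K[X] :=
  ∑ p ∈ antidiagonal n,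
    C (n.choose p.1 * ((p.1 + 1 : K) ^ p.1 / (p.1 + 1))) * (X + C (p.2 : K)) ^ p.2

variable {K : Type*} [Field K]

lemma derivative_abelPoly_succ (n : ℕ) :
    derivative (abelPoly K (n + 1)) = C (n + 1 : K) * (abelPoly K n).comp (X + 1) := by
  rw [abelPoly, abelPoly, derivative_sum, Nat.sum_antidiagonal_succ', sum_comp, mul_sum]
  simp only [pow_zero, mul_one, derivative_C, zero_add]
  refine sum_congr rfl fun p hp => ?_
  obtain ⟨i, j⟩ := p
  have hij : i + j = n := mem_antidiagonal.mp hp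
  have hchoose : ((n + 1).choose i : K) * (j + 1 : ℕ) = (n + 1) * n.choose i := by
    have := Nat.choose_mul_succ_eq n i
    rw [show n + 1 - i = j + 1 by omega] at this
    have := congrArg (Nat.cast : ℕ → K) this
    push_cast at this ⊢
    linear_combination -this
  have hshift : X + C ((j + 1 : ℕ) : K) = (X + 1) + C (j : K) := by
    rw [Nat.cast_succ, map_add, map_one]; ring
  rw [derivative_C_mul, derivative_X_add_C_pow, Nat.add_sub_cancel, hshift, mul_comp, C_comp,
    pow_comp, add_comp, X_comp, C_comp, ← mul_assoc, ← map_mul, mul_right_comm, hchoose,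
    ← mul_assoc, ← map_mul, mul_assoc]

variable [CharZero K]

lemma eval_abelPoly_succ (n : ℕ) : (abelPoly K (n + 1)).eval (-(n + 2 : K)) = 0 := by
  have hterm : ∀ p ∈ antidiagonal (n + 1),
      eval (-(n + 2 : K)) (C ((n + 1).choose p.1 * ((p.1 + 1 : K) ^ p.1 / (p.1 + 1))) *
        (X + C (p.2 : K)) ^ p.2) = (-1) ^ p.2 * ((n + 1).choose p.1 : K) * (1 + p.1) ^ n := by
    rintro ⟨i, j⟩ hp
    have hij : i + j = n + 1 := mem_antidiagonal.mp hp
    have hbase : -(n + 2 : K) + j = -(i + 1) := by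
      linear_combination (by exact_mod_cast hij : (i + j : K) = n + 1)
    have hpow : (i + 1 : K) ^ i * (i + 1) ^ j = (i + 1) ^ n * (i + 1) := by
      rw [← pow_add, ← pow_succ, hij]
    have hi : (i + 1 : K) ≠ 0 := Nat.cast_add_one_ne_zero i
    simp only [eval_mul, eval_C, eval_pow, eval_add, eval_X, hbase]
    rw [neg_pow]
    field_simp
    linear_combination ((n + 1).choose i : K) * hpow
  rw [abelPoly, eval_finsetSum, sum_congr rfl hterm,
    Nat.sum_antidiagonal_eq_sum_range_succ
      (fun i j => (-1) ^ j * ((n + 1).choose i : K) * (1 + i) ^ n)]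
  exact sum_range_neg_one_pow_mul_choose_mul_pow_eq_zero n.lt_succ_self 1

lemma abelPoly_eq (n : ℕ) : abelPoly K n = (X + C (n + 1 : K)) ^ n := by
  induction n with
  | zero => simp [abelPoly]
  | succ n ih =>
    refine eq_of_derivative_eq_of_eval_eq ?_ (a := -(n + 2)) ?_
    · rw [derivative_abelPoly_succ, ih, derivative_X_add_C_pow, Nat.add_sub_cancel, pow_comp,
        add_comp, X_comp, C_comp]
      push_cast
      simp only [map_add, map_one]
      ring
    · rw [eval_abelPoly_succ, eval_pow, eval_add, eval_X, eval_C]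
      push_cast
      ring

end Polynomial

def cayleyCoeff (k : ℕ) : ℚ := (k + 1 : ℚ) ^ k / (k + 1).factorial

lemma sum_antidiagonal_cayleyCoeff (n : ℕ) :
    ∑ p ∈ antidiagonal n, cayleyCoeff p.1 * (cayleyCoeff p.2 * (p.2 + 1)) =
      cayleyCoeff (n + 1) * (n + 1) := by
  have habel := congrArg (Polynomial.eval (1 : ℚ)) (Polynomial.abelPoly_eq (K := ℚ) n)
  simp only [Polynomial.abelPoly, Polynomial.eval_finsetSum, Polynomial.eval_mul,
    Polynomial.eval_C, Polynomial.eval_pow, Polynomial.eval_add, Polynomial.eval_X] at habel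
  have hterm : ∀ p ∈ antidiagonal n, cayleyCoeff p.1 * (cayleyCoeff p.2 * (p.2 + 1)) =
      (n.choose p.1 * ((p.1 + 1 : ℚ) ^ p.1 / (p.1 + 1)) * (1 + p.2) ^ p.2) / n.factorial := by
    rintro ⟨i, j⟩ hp
    obtain rfl : i + j = n := mem_antidiagonal.mp hp
    rw [Nat.cast_add_choose]
    simp only [cayleyCoeff, Nat.factorial_succ]
    push_cast
    field_simp
    ring
  rw [sum_congr rfl hterm, ← sum_div, habel, cayleyCoeff, Nat.factorial_succ, Nat.factorial_succ]
  push_cast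
  field_simp
  ring

lemma coeff_succ_mul_eq_sum_of_derivative_eq {R : Type*} [CommRing R] {T : R⟦X⟧}
    (h : d⁄dX R T = T * d⁄dX R (X * T)) (n : ℕ) :
    coeff (n + 1) T * (n + 1) =
      ∑ p ∈ antidiagonal n, coeff p.1 T * (coeff p.2 T * (p.2 + 1)) := by
  have hn := congrArg (coeff n) h
  rw [coeff_derivative, coeff_mul] at hn
  simpa only [coeff_derivative, coeff_succ_X_mul] using hn

lemma coeff_eq_cayleyCoeff_of_derivative_eq {T : ℚ⟦X⟧} (h0 : constantCoeff T = 1)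
    (h : d⁄dX ℚ T = T * d⁄dX ℚ (X * T)) (k : ℕ) : coeff k T = cayleyCoeff k := by
  induction k using Nat.strong_induction_on with
  | _ k ih =>
    rcases k with _ | n
    · simp [h0, cayleyCoeff]
    · have hrec := coeff_succ_mul_eq_sum_of_derivative_eq h n
      rw [sum_congr rfl fun p hp => by
          rw [ih p.1 (Nat.antidiagonal.fst_lt hp), ih p.2 (Nat.antidiagonal.snd_lt hp)],
        sum_antidiagonal_cayleyCoeff] at hrec
      exact mul_right_cancel₀ (Nat.cast_add_one_ne_zero n) hrec

/-- **Cayley's formula.** If `T ∈ ℚ[[s]]` satisfies `T = exp(sT)`, then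
the coefficient of `s^k` in `T` is `(k+1)^k/(k+1)!`. -/
theorem stmt12 (T : PowerSeries ℚ) (hT : T = expS (PowerSeries.X * T)) :
    ∀ k : ℕ, PowerSeries.coeff k T =
      ((k + 1 : ℚ)) ^ k / ((k + 1).factorial : ℚ) := by
  have hXT : constantCoeff (X * T) = 0 := by simp
  have h0 : constantCoeff T = 1 := by rw [hT]; exact constantCoeff_expS _
  have hode : d⁄dX ℚ T = T * d⁄dX ℚ (X * T) := by
    have := derivative_expS hXT
    rwa [← hT] at this
  exact coeff_eq_cayleyCoeff_of_derivative_eq h0 hode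
end

section
/- There exists a unique formal power series Φ ∈ ℚ[[x,s]] in two variables satisfying the functional equation exp(x + sΦ) = 1 + x + (s+1)·Φ, where exp(u) := Σ_{k≥0} u^k/k! (well defined since x + sΦ has zero constant coefficient). -/
namespace MvPowerSeries

variable {σ R : Type*} [CommRing R]

def EqBelow (n : ℕ) (f g : MvPowerSeries σ R) : Prop :=
  ∀ m : σ →₀ ℕ, m.degree < n → coeff m f = coeff m g

namespace EqBelow

variable {n : ℕ} {f f' g g' : MvPowerSeries σ R}

lemma of_zero (f g : MvPowerSeries σ R) : EqBelow 0 f g :=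
  fun _ hm => absurd hm (Nat.not_lt_zero _)

lemma refl (n : ℕ) (f : MvPowerSeries σ R) : EqBelow n f f := fun _ _ => rfl

lemma add (hf : EqBelow n f f') (hg : EqBelow n g g') : EqBelow n (f + g) (f' + g') :=
  fun m hm => by rw [map_add, map_add, hf m hm, hg m hm]

lemma sub (hf : EqBelow n f f') (hg : EqBelow n g g') : EqBelow n (f - g) (f' - g') :=
  fun m hm => by rw [map_sub, map_sub, hf m hm, hg m hm]

lemma mul (hf : EqBelow n f f') (hg : EqBelow n g g') : EqBelow n (f * g) (f' * g') := by
  classical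
  intro m hm
  rw [coeff_mul, coeff_mul]
  refine Finset.sum_congr rfl fun p hp => ?_
  have hdeg : p.1.degree + p.2.degree = m.degree := by
    rw [← map_add, Finset.HasAntidiagonal.mem_antidiagonal.mp hp]
  rw [hf p.1 (by omega), hg p.2 (by omega)]

lemma pow (hf : EqBelow n f f') (k : ℕ) : EqBelow n (f ^ k) (f' ^ k) := by
  induction k with
  | zero => simpa using refl n 1
  | succ k ih => simpa only [pow_succ] using ih.mul hf

lemma X_mul (hf : EqBelow n f f') (i : σ) : EqBelow (n + 1) (X i * f) (X i * f') := by
  intro m hm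
  rw [X, coeff_monomial_mul, coeff_monomial_mul]
  split_ifs with hi
  · have hdeg := congrArg Finsupp.degree (tsub_add_cancel_of_le hi)
    rw [map_add, Finsupp.degree_single] at hdeg
    rw [hf _ (by omega)]
  · rfl

lemma expS [Algebra ℚ R] (hf : EqBelow n f f') : EqBelow n (expS f) (expS f') := by
  intro m hm
  rw [coeff_apply, coeff_apply, _root_.expS, _root_.expS, map_sum, map_sum]
  refine Finset.sum_congr rfl fun k _ => ?_
  exact congrArg (((k.factorial : ℚ)⁻¹) • ·) ((hf.pow k) m hm)

end EqBelow

lemma eq_of_forall_eqBelow {f g : MvPowerSeries σ R} (h : ∀ n, EqBelow n f g) : f = g :=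
  ext fun m => h (m.degree + 1) m (Nat.lt_succ_self _)

def IsDegreeContraction (T : MvPowerSeries σ R → MvPowerSeries σ R) : Prop :=
  ∀ ⦃n f g⦄, EqBelow n f g → EqBelow (n + 1) (T f) (T g)

namespace IsDegreeContraction

variable {T : MvPowerSeries σ R → MvPowerSeries σ R} (hT : IsDegreeContraction T)
include hT

lemma eqBelow_iterate (n : ℕ) (f g : MvPowerSeries σ R) : EqBelow n (T^[n] f) (T^[n] g) := by
  induction n with
  | zero => exact EqBelow.of_zero f g
  | succ n ih => simpa only [Function.iterate_succ_apply'] using hT ih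

theorem existsUnique_fixedPoint : ∃! Φ, T Φ = Φ := by
  let Φ : MvPowerSeries σ R := fun m => coeff m (T^[m.degree + 1] 0)
  have hΦ : ∀ n, EqBelow n Φ (T^[n] 0) := by
    intro n m hm
    obtain ⟨k, rfl⟩ := Nat.exists_eq_add_of_lt hm
    rw [show m.degree + k + 1 = m.degree + 1 + k by omega, Function.iterate_add_apply]
    exact hT.eqBelow_iterate _ 0 _ m (Nat.lt_succ_self _)
  have hΦT : T Φ = Φ := ext fun m => by
    rw [hΦ (m.degree + 1) m (Nat.lt_succ_self _), Function.iterate_succ_apply']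
    exact hT (hΦ m.degree) m (Nat.lt_succ_self _)
  refine ⟨Φ, hΦT, fun Ψ hΨ => eq_of_forall_eqBelow fun n => ?_⟩
  rw [← Function.iterate_fixed hΨ n, ← Function.iterate_fixed hΦT n]
  exact hT.eqBelow_iterate n Ψ Φ

end IsDegreeContraction

variable [Algebra ℚ R]

noncomputable def stableTreeMap (x s : σ) (Φ : MvPowerSeries σ R) : MvPowerSeries σ R :=
  _root_.expS (X x + X s * Φ) - 1 - X x - X s * Φ

lemma isDegreeContraction_stableTreeMap (x s : σ) :
    IsDegreeContraction (stableTreeMap (R := R) x s) := by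
  intro n Φ Ψ h
  have hsΦ := h.X_mul s
  exact ((((EqBelow.refl _ (X x)).add hsΦ).expS.sub (.refl _ 1)).sub (.refl _ (X x))).sub hsΦ

end MvPowerSeries

open MvPowerSeries

/-- There is a unique `Φ ∈ ℚ[[x,s]]` with
`exp(x + sΦ) = 1 + x + (s+1)·Φ` (the generating series of stable trees). -/
theorem stmt13 :
    ∃! Φ : MvPowerSeries (Fin 2) ℚ,
      expS (MvPowerSeries.X 0 + MvPowerSeries.X 1 * Φ) =
        1 + MvPowerSeries.X 0 + (MvPowerSeries.X 1 + 1) * Φ := by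
  refine (existsUnique_congr fun Φ => ?_).mpr
    (isDegreeContraction_stableTreeMap (R := ℚ) (0 : Fin 2) 1).existsUnique_fixedPoint
  rw [stableTreeMap]
  constructor <;> intro h <;> linear_combination h
end

section
/- Let Φ ∈ ℚ[[x,s]] be the unique formal power series with Φ = exp(x + sΦ). Suppose Ψ₁ ∈ ℚ[[x,s]] satisfies the equation ∂Ψ₁/∂s = (1/2)·( ∂Φ/∂x + 2Φ·∂Ψ₁/∂x ) with initial condition Ψ₁|_{s=0} = 0. Then Ψ₁ = −(1/2)·log(1 − sΦ), where log(1−u) := −Σ_{k≥1} u^k/k (well defined since sΦ has zero constant coefficient). -/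
/-!
Both `expS` and `logOneSubS` are series `Σ aₖ fᵏ` in an `f` without constant term, so the chain
rule `∂(Σ aₖ fᵏ) = ∂f · Σ (k+1) aₖ₊₁ fᵏ` can be checked on finite partial sums, coefficient by
coefficient. Differentiating `Φ = exp(x + sΦ)` in `x` and in `s` and cancelling the unit `1 - sΦ`
gives `∂ₓΦ = ∂ₛ(sΦ)`, from which `L = log(1 - sΦ)` satisfies `∂ₛL = Φ ∂ₓL - ∂ₓΦ`. Hence `-L/2`
solves the same equation as `Ψ₁`, and the difference `D` solves the transport equation
`∂ₛD = Φ ∂ₓD` and vanishes at `s = 0`; such a `D` is zero by induction on the `s`-degree.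
-/

open MvPowerSeries Finset
open Finsupp (degree degree_mono degree_single single)

theorem pd_eq_pderiv {σ R : Type*} [CommSemiring R] (i : σ) (f : MvPowerSeries σ R) :
    pd R i f = pderiv R i f := by
  ext m
  rw [coeff_pderiv, mul_comm]
  simp [pd, MvPowerSeries.coeff_apply]

namespace MvPowerSeries

variable {σ R : Type*} [CommRing R]

theorem coeff_pow_eq_zero_of_degree_lt {f : MvPowerSeries σ R} (hf : constantCoeff f = 0)
    {k : ℕ} {m : σ →₀ ℕ} (h : degree m < k) : coeff m (f ^ k) = 0 :=
  coeff_of_lt_order ((Nat.cast_lt.mpr h).trans_le (le_order_pow_of_constantCoeff_eq_zero k hf))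

theorem coeff_mul_congr_right {f g g' : MvPowerSeries σ R} {m : σ →₀ ℕ}
    (h : ∀ d, degree d ≤ degree m → coeff d g = coeff d g') :
    coeff m (f * g) = coeff m (f * g') := by
  classical
  rw [coeff_mul, coeff_mul]
  refine sum_congr rfl fun p hp => ?_
  rw [h p.2 (degree_mono (HasAntidiagonal.antidiagonal.snd_le hp))]

noncomputable def evalPartial (a : ℕ → R) (f : MvPowerSeries σ R) (N : ℕ) : MvPowerSeries σ R :=
  ∑ k ∈ range (N + 1), a k • f ^ k

noncomputable def evalSeries (a : ℕ → R) (f : MvPowerSeries σ R) : MvPowerSeries σ R :=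
  fun m => coeff m (evalPartial a f (degree m))

theorem coeff_evalSeries (a : ℕ → R) {f : MvPowerSeries σ R} (hf : constantCoeff f = 0)
    {m : σ →₀ ℕ} {N : ℕ} (h : degree m ≤ N) :
    coeff m (evalSeries a f) = coeff m (evalPartial a f N) := by
  change coeff m (evalPartial a f (degree m)) = _
  rw [evalPartial, evalPartial, map_sum, map_sum]
  refine sum_subset (range_subset_range.mpr (by omega)) fun k _ hk => ?_
  rw [mem_range, not_lt] at hk
  rw [coeff_smul, coeff_pow_eq_zero_of_degree_lt hf (by omega), mul_zero]

theorem pderiv_evalPartial (i : σ) (a : ℕ → R) (f : MvPowerSeries σ R) (N : ℕ) :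
    pderiv R i (evalPartial a f (N + 1)) =
      pderiv R i f * evalPartial (fun k => (k + 1) * a (k + 1)) f N := by
  rw [evalPartial, evalPartial, sum_range_succ', map_add, map_sum, Finset.mul_sum, pow_zero,
    Derivation.map_smul, Derivation.map_one_eq_zero, smul_zero, add_zero]
  refine sum_congr rfl fun k _ => ?_
  rw [Derivation.map_smul, pderiv_pow, smul_eq_C_mul, smul_eq_C_mul, map_mul]
  push_cast
  simp only [map_add, map_natCast, map_one]
  ring

theorem pderiv_evalSeries (i : σ) (a : ℕ → R) {f : MvPowerSeries σ R}
    (hf : constantCoeff f = 0) :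
    pderiv R i (evalSeries a f) =
      pderiv R i f * evalSeries (fun k => (k + 1) * a (k + 1)) f := by
  ext m
  have hdeg : degree (m + single i 1) ≤ degree m + 1 := by simp [degree_single]
  calc coeff m (pderiv R i (evalSeries a f))
      = coeff m (pderiv R i (evalPartial a f (degree m + 1))) := by
        rw [coeff_pderiv, coeff_pderiv, coeff_evalSeries a hf hdeg]
    _ = _ := by
        rw [pderiv_evalPartial]
        exact coeff_mul_congr_right fun d hd => (coeff_evalSeries _ hf hd).symm

theorem one_sub_mul_evalSeries_const {u : MvPowerSeries σ R} (hu : constantCoeff u = 0)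
    (c : R) : (1 - u) * evalSeries (fun _ => c) u = C c := by
  classical
  ext m
  rw [coeff_mul_congr_right fun d hd => coeff_evalSeries _ hu hd, evalPartial,
    ← Finset.smul_sum, mul_smul_comm, mul_neg_geom_sum, coeff_smul, map_sub,
    coeff_pow_eq_zero_of_degree_lt hu (Nat.lt_succ_self _), sub_zero, coeff_one, coeff_C]
  split_ifs <;> simp

theorem X_dvd_evalSeries {s : σ} {a : ℕ → R} (ha : a 0 = 0) {u : MvPowerSeries σ R}
    (hu : X s ∣ u) : X s ∣ evalSeries a u := by
  refine X_dvd_iff.mpr fun m hm => X_dvd_iff.mp (?_ : X s ∣ evalPartial a u (degree m)) m hm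
  refine dvd_sum fun k _ => ?_
  rcases k with _ | k
  · simp [ha]
  · rw [smul_eq_C_mul]
    exact dvd_mul_of_dvd_right (dvd_pow hu k.succ_ne_zero) _

section RatAlgebra

variable [Algebra ℚ R]

theorem expS_eq_evalSeries (f : MvPowerSeries σ R) :
    expS f = evalSeries (fun k => algebraMap ℚ R (k.factorial : ℚ)⁻¹) f := by
  ext m
  change coeff m (∑ k ∈ range (degree m + 1), _) = coeff m (∑ k ∈ range (degree m + 1), _)
  simp only [algebraMap_smul]

theorem logOneSubS_eq_evalSeries (u : MvPowerSeries σ R) :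
    logOneSubS u = evalSeries (fun k => -algebraMap ℚ R (k : ℚ)⁻¹) u := by
  ext m
  change coeff m (-∑ k ∈ Icc 1 (degree m), _) = coeff m (∑ k ∈ range (degree m + 1), _)
  -- the `k = 0` term on the right vanishes since `(0 : ℚ)⁻¹ = 0`
  simp only [algebraMap_smul, neg_smul, sum_neg_distrib, sum_range_succ', Nat.cast_zero,
    inv_zero, zero_smul, add_zero]
  rw [range_eq_Ico, sum_Ico_add' (fun k : ℕ => ((k : ℚ)⁻¹ • u ^ k)) 0 _ 1, zero_add,
    Ico_add_one_right_eq_Icc]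

theorem pderiv_expS (i : σ) {f : MvPowerSeries σ R} (hf : constantCoeff f = 0) :
    pderiv R i (expS f) = pderiv R i f * expS f := by
  rw [expS_eq_evalSeries, pderiv_evalSeries i _ hf]
  congr 3 with k
  have hcast : (k : R) + 1 = algebraMap ℚ R ((k + 1 : ℕ) : ℚ) := by simp
  rw [hcast, ← map_mul]
  congr 1
  rw [Nat.factorial_succ]
  push_cast
  field_simp

theorem one_sub_mul_pderiv_logOneSubS (i : σ) {u : MvPowerSeries σ R}
    (hu : constantCoeff u = 0) :
    (1 - u) * pderiv R i (logOneSubS u) = -pderiv R i u := by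
  have hcoeff : (fun k : ℕ => ((k : R) + 1) * -algebraMap ℚ R ((k + 1 : ℕ) : ℚ)⁻¹) =
      fun _ => -1 := by
    ext k
    have hcast : (k : R) + 1 = algebraMap ℚ R ((k + 1 : ℕ) : ℚ) := by simp
    rw [hcast, mul_neg, ← map_mul, mul_inv_cancel₀ (by positivity), map_one]
  rw [logOneSubS_eq_evalSeries, pderiv_evalSeries i _ hu, hcoeff, mul_left_comm,
    one_sub_mul_evalSeries_const hu, map_neg, map_one, mul_neg_one]

end RatAlgebra

theorem eq_zero_of_pderiv_eq_mul_pderiv [IsAddTorsionFree R] {i j : σ} (hij : i ≠ j)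
    {g D : MvPowerSeries σ R} (hD : pderiv R i D = g * pderiv R j D) (h0 : X i ∣ D) :
    D = 0 := by
  classical
  rw [X_dvd_iff] at h0
  have step : ∀ m : σ →₀ ℕ, (∀ d : σ →₀ ℕ, d i ≤ m i → coeff d D = 0) →
      coeff (m + single i 1) D = 0 := by
    intro m hm
    -- neither `∂ⱼ` (`j ≠ i`) nor multiplication by `g` lowers the exponent of `Xᵢ`
    have hrhs : coeff m (g * pderiv R j D) = 0 := by
      refine sum_eq_zero fun p hp => ?_
      have hle : p.2 i ≤ m i := HasAntidiagonal.antidiagonal.snd_le hp i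
      rw [coeff_pderiv, hm _ (by simpa [Finsupp.single_apply, hij] using hle), zero_mul,
        mul_zero]
    have h := congrArg (coeff m) hD
    rw [hrhs, coeff_pderiv, mul_comm, ← Nat.cast_succ, ← nsmul_eq_mul] at h
    exact (smul_eq_zero.mp h).resolve_left (Nat.succ_ne_zero _)
  have hle : ∀ b, ∀ d : σ →₀ ℕ, d i ≤ b → coeff d D = 0 := by
    intro b
    induction b with
    | zero => exact fun d hd => h0 d (Nat.le_zero.mp hd)
    | succ b ih =>
      intro d hd
      rcases Nat.lt_or_ge b (d i) with hb | hb
      · have hsingle : single i 1 ≤ d := Finsupp.single_le_iff.mpr (by omega)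
        rw [← tsub_add_cancel_of_le hsingle]
        refine step _ fun e he => ih e ?_
        simp only [Finsupp.tsub_apply, Finsupp.single_eq_same] at he
        omega
      · exact ih d hb
  ext m
  exact hle _ m le_rfl

section Fin2

variable [Algebra ℚ R] {Φ : MvPowerSeries (Fin 2) R}

theorem pderiv_zero_eq_pderiv_one_X_one_mul (hΦ : Φ = expS (X 0 + X 1 * Φ)) :
    pderiv R 0 Φ = pderiv R 1 (X 1 * Φ) := by
  have hc : constantCoeff (X 0 + X 1 * Φ : MvPowerSeries (Fin 2) R) = 0 := by simp
  have hx := pderiv_expS 0 hc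
  have hs := pderiv_expS 1 hc
  rw [← hΦ] at hx hs
  simp only [map_add, Derivation.leibniz, smul_eq_mul, pderiv_X_self,
    pderiv_X_of_ne (show (1 : Fin 2) ≠ 0 by decide),
    pderiv_X_of_ne (show (0 : Fin 2) ≠ 1 by decide)] at hx hs ⊢
  have hunit : IsUnit (1 - X 1 * Φ) := isUnit_iff_constantCoeff.mpr (by simp)
  apply hunit.mul_left_cancel
  linear_combination hx - X 1 * hs

theorem pderiv_one_logOneSubS (hΦ : Φ = expS (X 0 + X 1 * Φ)) :
    pderiv R 1 (logOneSubS (X 1 * Φ)) =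
      Φ * pderiv R 0 (logOneSubS (X 1 * Φ)) - pderiv R 0 Φ := by
  have hc : constantCoeff (X 1 * Φ : MvPowerSeries (Fin 2) R) = 0 := by simp
  have hx := one_sub_mul_pderiv_logOneSubS 0 hc
  have hs := one_sub_mul_pderiv_logOneSubS 1 hc
  have hxs := pderiv_zero_eq_pderiv_one_X_one_mul hΦ
  simp only [Derivation.leibniz, smul_eq_mul, pderiv_X_self,
    pderiv_X_of_ne (show (1 : Fin 2) ≠ 0 by decide)] at hx hs hxs
  have hunit : IsUnit (1 - X 1 * Φ) := isUnit_iff_constantCoeff.mpr (by simp)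
  apply hunit.mul_left_cancel
  linear_combination hs - Φ * hx + hxs

end Fin2

end MvPowerSeries

theorem Finsupp.eq_single_zero_of_apply_one_eq_zero {m : Fin 2 →₀ ℕ} (hm : m 1 = 0) :
    m = single 0 (m 0) := by
  ext j
  fin_cases j <;> simp [hm]

/-- Let `Φ = exp(x + sΦ)`.  If `Ψ₁` satisfies
`∂Ψ₁/∂s = ½(∂Φ/∂x + 2Φ·∂Ψ₁/∂x)` with `Ψ₁|_{s=0} = 0`, then `Ψ₁ = −½·log(1 − sΦ)`.
(Here `x = X 0`, `s = X 1`.) -/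
theorem stmt14 (Φ Ψ₁ : MvPowerSeries (Fin 2) ℚ)
    (hΦ : Φ = expS (MvPowerSeries.X 0 + MvPowerSeries.X 1 * Φ))
    (heq : pd ℚ 1 Ψ₁ = (2 : ℚ)⁻¹ • (pd ℚ 0 Φ + 2 * Φ * pd ℚ 0 Ψ₁))
    (hinit : ∀ n : ℕ, MvPowerSeries.coeff (Finsupp.single 0 n) Ψ₁ = 0) :
    Ψ₁ = -((2 : ℚ)⁻¹) • logOneSubS (MvPowerSeries.X 1 * Φ) := by
  have hL : X 1 ∣ logOneSubS (X 1 * Φ) := by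
    rw [logOneSubS_eq_evalSeries]
    exact X_dvd_evalSeries (by simp) (dvd_mul_right _ _)
  have hΨ₁ : X 1 ∣ Ψ₁ := X_dvd_iff.mpr fun m hm => by
    rw [Finsupp.eq_single_zero_of_apply_one_eq_zero hm]
    exact hinit _
  rw [← sub_eq_zero]
  refine eq_zero_of_pderiv_eq_mul_pderiv (show (1 : Fin 2) ≠ 0 by decide) (g := Φ) ?_
    (dvd_sub hΨ₁ (dvd_smul_of_dvd _ hL))
  simp only [pd_eq_pderiv] at heq
  rw [map_sub, map_sub, Derivation.map_smul, Derivation.map_smul, heq,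
    pderiv_one_logOneSubS hΦ]
  simp only [smul_eq_C_mul, map_neg]
  have h2 : C (2⁻¹ : ℚ) * 2 = (1 : MvPowerSeries (Fin 2) ℚ) := by
    rw [← map_ofNat C 2, ← map_mul, inv_mul_cancel₀ two_ne_zero, map_one]
  linear_combination (Φ * pderiv ℚ 0 Ψ₁) * h2
end
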